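/- arXiv:1402.1396 — 7 statements merged into one kernel-verified Lean document; each statement's English description precedes it below -/
import Mathlib

section
/- All complex roots of a nonconstant polynomial equation c_0 x^n = c_1 x^{n-1} + ... + c_{n-1} x + c_n with c_0 ≠ 0 have absolute value at most 2 · max_{p=1,...,n} |c_p / c_0|^{1/p} (Fujiwara's bound). -/
/-!
If `‖x‖ > 2M`, where `M` bounds every `|c_p / c_0|^(1/p)`, then `‖c_p / c_0‖ ‖x‖^(n-p) < 2^(-p) ‖x‖^n`,
and summing over `p` gives `‖∑ (c_p / c_0) x^(n-p)‖ < (1 - 2^(-n)) ‖x‖^n < ‖x^n‖`, so `x` cannot be a root.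
-/

open Finset

lemma sum_Icc_one_half_pow (n : ℕ) : ∑ p ∈ Icc 1 n, (1 / 2 : ℝ) ^ p = 1 - (1 / 2) ^ n := by
  induction n with
  | zero => simp
  | succ k ih => rw [sum_Icc_succ_top (by omega), ih]; ring

lemma sum_Icc_pow_mul_pow_sub_lt {M r : ℝ} (hM : 0 ≤ M) (hr : 2 * M < r) (n : ℕ) :
    ∑ p ∈ Icc 1 n, M ^ p * r ^ (n - p) < r ^ n := by
  have hr0 : 0 < r := by linarith
  have hterm : ∀ p ∈ Icc 1 n, M ^ p * r ^ (n - p) ≤ (1 / 2 : ℝ) ^ p * r ^ n := by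
    intro p hp
    have hpn : p ≤ n := (mem_Icc.mp hp).2
    calc M ^ p * r ^ (n - p) ≤ (r / 2) ^ p * r ^ (n - p) := by gcongr; linarith
      _ = (1 / 2 : ℝ) ^ p * r ^ n := by
        rw [div_eq_mul_one_div r, mul_pow, mul_comm (r ^ p), mul_assoc, ← pow_add,
          Nat.add_sub_cancel' hpn]
  calc ∑ p ∈ Icc 1 n, M ^ p * r ^ (n - p) ≤ ∑ p ∈ Icc 1 n, (1 / 2 : ℝ) ^ p * r ^ n :=
        sum_le_sum hterm
    _ = (1 - (1 / 2) ^ n) * r ^ n := by rw [← sum_mul, sum_Icc_one_half_pow]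
    _ < r ^ n := by
        have : 0 < r ^ n := pow_pos hr0 n
        have : (0 : ℝ) < (1 / 2) ^ n := by positivity
        nlinarith

lemma norm_pow_le_sum_of_eq_sum {𝕜 : Type*} [NormedDivisionRing 𝕜] {n : ℕ} {s : Finset ℕ}
    {a : ℕ → 𝕜} {x : 𝕜} {M : ℝ} (hx : x ^ n = ∑ p ∈ s, a p * x ^ (n - p))
    (ha : ∀ p ∈ s, ‖a p‖ ≤ M ^ p) :
    ‖x‖ ^ n ≤ ∑ p ∈ s, M ^ p * ‖x‖ ^ (n - p) :=
  calc ‖x‖ ^ n = ‖∑ p ∈ s, a p * x ^ (n - p)‖ := by rw [← hx, norm_pow]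
    _ ≤ ∑ p ∈ s, ‖a p * x ^ (n - p)‖ := norm_sum_le _ _
    _ ≤ ∑ p ∈ s, M ^ p * ‖x‖ ^ (n - p) := by
        refine sum_le_sum fun p hp => ?_
        rw [norm_mul, norm_pow]
        gcongr
        exact ha p hp

lemma le_pow_of_rpow_inv_le {a M : ℝ} (ha : 0 ≤ a) (hM : 0 ≤ M) {p : ℕ} (hp : p ≠ 0)
    (h : a ^ (p : ℝ)⁻¹ ≤ M) : a ≤ M ^ p := by
  rwa [Real.rpow_inv_le_iff_of_pos ha hM (by positivity), Real.rpow_natCast] at h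

/-- Fujiwara's bound: all complex roots of a nonconstant polynomial equation
`c 0 * x ^ n = c 1 * x ^ (n-1) + ... + c n` with `c 0 ≠ 0` have absolute value at most
`2 * max_{1 ≤ p ≤ n} |c p / c 0| ^ (1/p)`. -/
theorem fujiwara_bound (n : ℕ) (hn : 1 ≤ n) (c : ℕ → ℂ) (hc0 : c 0 ≠ 0) (x : ℂ)
    (hx : c 0 * x ^ n = ∑ p ∈ Finset.Icc 1 n, c p * x ^ (n - p)) :
    ‖x‖ ≤
      2 * (Finset.Icc 1 n).sup' (Finset.nonempty_Icc.mpr hn)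
        (fun p => ‖c p / c 0‖ ^ ((p : ℝ)⁻¹)) := by
  set M := (Finset.Icc 1 n).sup' (Finset.nonempty_Icc.mpr hn)
    (fun p => ‖c p / c 0‖ ^ ((p : ℝ)⁻¹))
  have hM : 0 ≤ M :=
    le_sup'_of_le _ (left_mem_Icc.mpr hn) (Real.rpow_nonneg (norm_nonneg _) _)
  have hcoeff : ∀ p ∈ Icc 1 n, ‖c p / c 0‖ ≤ M ^ p := fun p hp =>
    le_pow_of_rpow_inv_le (norm_nonneg _) hM (by have := (mem_Icc.mp hp).1; omega)
      (le_sup' (fun p => ‖c p / c 0‖ ^ ((p : ℝ)⁻¹)) hp)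
  have hmonic : x ^ n = ∑ p ∈ Icc 1 n, c p / c 0 * x ^ (n - p) := by
    simp_rw [div_mul_eq_mul_div, ← sum_div, ← hx, mul_div_cancel_left₀ _ hc0]
  by_contra! hlarge
  exact (sum_Icc_pow_mul_pow_sub_lt hM hlarge n).not_ge
    (norm_pow_le_sum_of_eq_sum hmonic hcoeff)
end

section
/- For positive reals x_1,...,x_κ with κ ≥ n, and any p with 1 ≤ p ≤ n, one has (s_{n-p}(x)/s_n(x))^{1/p} ≤ s_{n-1}(x)/s_n(x). -/
open Finset

/-- the `j`-th elementary symmetric polynomial of `x 1, ..., x κ`. -/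
noncomputable def esymmEval (κ : ℕ) (x : Fin κ → ℝ) (j : ℕ) : ℝ :=
  ∑ A ∈ Finset.powersetCard j (Finset.univ : Finset (Fin κ)), ∏ i ∈ A, x i

/-!
The elementary symmetric polynomials of positive reals form a log-concave sequence,
`s_k s_{k+2} ≤ s_{k+1}^2`, by induction on the number of variables through
`s_{k+1}(a, x) = s_{k+1}(x) + a s_k(x)`; the cross term of that expansion is controlled by the
monotonicity of the ratios `s_{j-1}/s_j` for fewer variables. As `s_j > 0` for `j ≤ κ`, these ratios
increase with `j`, so `s_{n-p}/s_n = ∏_{j=n-p+1}^{n} s_{j-1}/s_j ≤ (s_{n-1}/s_n)^p`.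
-/

section LogConcave

variable {R : Type*} [CommRing R] [LinearOrder R] [IsStrictOrderedRing R] {e : ℕ → R} {N : ℕ}

theorem mul_succ_le_succ_mul_of_logConcave (h0 : ∀ k, 0 ≤ e k)
    (hlc : ∀ k, e k * e (k + 2) ≤ e (k + 1) ^ 2) (hpos : ∀ k ≤ N, 0 < e k)
    {j k : ℕ} (hjk : j ≤ k) (hk : k ≤ N) :
    e j * e (k + 1) ≤ e (j + 1) * e k := by
  induction k, hjk using Nat.le_induction with
  | base => rw [mul_comm]
  | succ k hjk ih =>
    have h := mul_le_mul (ih (by omega)) (hlc k) (mul_nonneg (h0 _) (h0 _))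
      (mul_nonneg (h0 _) (h0 _))
    refine le_of_mul_le_mul_right ?_ (mul_pos (hpos k (by omega)) (hpos (k + 1) hk))
    linear_combination h

theorem mul_pow_le_mul_pow_of_logConcave (h0 : ∀ k, 0 ≤ e k)
    (hlc : ∀ k, e k * e (k + 2) ≤ e (k + 1) ^ 2) (hpos : ∀ k ≤ N, 0 < e k)
    {n p : ℕ} (hpn : p ≤ n) (hn : n ≤ N) :
    e (n - p) * e n ^ p ≤ e n * e (n - 1) ^ p := by
  induction p with
  | zero => simp
  | succ p ih =>
    have hstep : e (n - (p + 1)) * e n ≤ e (n - p) * e (n - 1) := by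
      have := mul_succ_le_succ_mul_of_logConcave h0 hlc hpos (j := n - (p + 1)) (k := n - 1)
        (by omega) (by omega)
      rwa [show n - (p + 1) + 1 = n - p by omega, show n - 1 + 1 = n by omega] at this
    calc e (n - (p + 1)) * e n ^ (p + 1) = (e (n - (p + 1)) * e n) * e n ^ p := by ring
      _ ≤ (e (n - p) * e (n - 1)) * e n ^ p :=
        mul_le_mul_of_nonneg_right hstep (pow_nonneg (h0 n) p)
      _ = e (n - 1) * (e (n - p) * e n ^ p) := by ring
      _ ≤ e (n - 1) * (e n * e (n - 1) ^ p) := mul_le_mul_of_nonneg_left (ih (by omega)) (h0 _)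
      _ = e n * e (n - 1) ^ (p + 1) := by ring

end LogConcave

namespace Multiset

section CommSemiring

variable {R : Type*} [CommSemiring R]

theorem esymm_zero (s : Multiset R) : s.esymm 0 = 1 := by
  simp [esymm]

theorem esymm_cons_succ (a : R) (s : Multiset R) (k : ℕ) :
    (a ::ₘ s).esymm (k + 1) = s.esymm (k + 1) + a * s.esymm k := by
  simp only [esymm, powersetCard_cons, map_add, sum_add, map_map, Function.comp_def, prod_cons,
    sum_map_mul_left]

theorem esymm_eq_zero_of_card_lt (s : Multiset R) {k : ℕ} (h : card s < k) : s.esymm k = 0 := by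
  simp [esymm, powersetCard_eq_empty k h]

end CommSemiring

section OrderedSemiring

variable {R : Type*} [CommSemiring R] [PartialOrder R]

theorem esymm_nonneg [IsOrderedRing R] {s : Multiset R} (hs : ∀ y ∈ s, 0 ≤ y) (k : ℕ) :
    0 ≤ s.esymm k :=
  sum_nonneg fun _ hmem ↦ by
    obtain ⟨t, ht, rfl⟩ := mem_map.1 hmem
    exact prod_nonneg fun y hy ↦ hs y (mem_of_le (mem_powersetCard.1 ht).1 hy)

theorem esymm_pos [IsStrictOrderedRing R] {s : Multiset R} (hs : ∀ y ∈ s, 0 < y) {k : ℕ}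
    (hk : k ≤ card s) :
    0 < s.esymm k := by
  have hne : powersetCard k s ≠ 0 := by
    rw [← card_pos, card_powersetCard]; exact Nat.choose_pos hk
  simpa [esymm] using sum_lt_sum_of_nonempty (f := fun _ ↦ (0 : R)) (g := prod) hne
    fun t ht ↦ prod_pos fun y hy ↦ hs y (mem_of_le (mem_powersetCard.1 ht).1 hy)

end OrderedSemiring

theorem esymm_mul_esymm_le_sq {R : Type*} [CommRing R] [LinearOrder R] [IsStrictOrderedRing R]
    {s : Multiset R} (hs : ∀ y ∈ s, 0 < y) (k : ℕ) :
    s.esymm k * s.esymm (k + 2) ≤ s.esymm (k + 1) ^ 2 := by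
  induction s using Multiset.induction generalizing k with
  | empty => simp [esymm_eq_zero_of_card_lt 0 (k := k + 2) (by simp), sq_nonneg]
  | cons a t ih =>
    have ha : 0 ≤ a := (hs a (mem_cons_self a t)).le
    have ht : ∀ y ∈ t, 0 < y := fun y hy ↦ hs y (mem_cons_of_mem hy)
    have h0 : ∀ j, 0 ≤ t.esymm j := esymm_nonneg fun y hy ↦ (ht y hy).le
    rcases k with _ | m
    · have h := ih ht 0
      simp only [esymm_cons_succ, esymm_zero] at h ⊢
      linear_combination h + a * h0 1 + sq_nonneg a
    · have cross : t.esymm m * t.esymm (m + 3) ≤ t.esymm (m + 1) * t.esymm (m + 2) := by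
        rcases lt_or_ge (card t) (m + 3) with h | h
        · rw [esymm_eq_zero_of_card_lt t h, mul_zero]; exact mul_nonneg (h0 _) (h0 _)
        · exact mul_succ_le_succ_mul_of_logConcave h0 (ih ht) (fun k hk ↦ esymm_pos ht hk)
            (N := card t) (j := m) (k := m + 2) (by omega) (by omega)
      simp only [esymm_cons_succ]
      linear_combination ih ht (m + 1) + a * cross + a ^ 2 * ih ht m

end Multiset

/-- For positive reals `x_1, ..., x_κ` with `κ ≥ n` and `1 ≤ p ≤ n`, one has
`(s_{n-p}(x)/s_n(x))^(1/p) ≤ s_{n-1}(x)/s_n(x)`. -/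
theorem esymm_ratio_rpow_le (κ n p : ℕ) (hnκ : n ≤ κ) (hp1 : 1 ≤ p) (hpn : p ≤ n)
    (x : Fin κ → ℝ) (hx : ∀ i, 0 < x i) :
    (esymmEval κ x (n - p) / esymmEval κ x n) ^ ((p : ℝ)⁻¹) ≤
      esymmEval κ x (n - 1) / esymmEval κ x n := by
  set s : Multiset ℝ := univ.val.map x
  have hs : ∀ y ∈ s, 0 < y := by
    intro y hy
    obtain ⟨i, -, rfl⟩ := Multiset.mem_map.1 hy
    exact hx i
  have hcard : Multiset.card s = κ := by simp [s]
  have heq (j : ℕ) : esymmEval κ x j = s.esymm j := (univ.esymm_map_val x j).symm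
  simp only [heq]
  have hn : 0 < s.esymm n := Multiset.esymm_pos hs (by omega)
  have h0 (j : ℕ) : 0 ≤ s.esymm j := Multiset.esymm_nonneg (fun y hy ↦ (hs y hy).le) j
  have hratio : s.esymm (n - p) / s.esymm n ≤ (s.esymm (n - 1) / s.esymm n) ^ p := by
    rw [div_pow, div_le_div_iff₀ hn (pow_pos hn p), mul_comm _ (s.esymm n)]
    exact mul_pow_le_mul_pow_of_logConcave h0 (Multiset.esymm_mul_esymm_le_sq hs)
      (fun k hk ↦ Multiset.esymm_pos hs hk) hpn (hcard ▸ hnκ)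
  calc (s.esymm (n - p) / s.esymm n) ^ (p : ℝ)⁻¹
      ≤ ((s.esymm (n - 1) / s.esymm n) ^ p) ^ (p : ℝ)⁻¹ := by
        gcongr; exact div_nonneg (h0 _) hn.le
    _ = s.esymm (n - 1) / s.esymm n :=
        Real.pow_rpow_inv_natCast (div_nonneg (h0 _) hn.le) (by omega)
end

section
/- Let κ ≥ n ≥ 1 be integers, a_1 > ... > a_κ > 0 positive integers, μ = 1·a_1 + 2·a_2 + ... + κ·a_κ, n_κ = n + κ(n-1), and for 0 ≤ p ≤ n set f_p(t) = (2μ)^p · (n_κ!/(n_κ-p)!) · (a_1 t_1 + ... + a_κ t_κ)^{n_κ-p}. Then the coefficient of t_1^n ⋯ t_κ^n in f_p(t) · s_{κ-n+p}(t) equals (2μ)^n · (n_κ!/((n-1)!)^κ) · (a_1⋯a_κ)^{n-1} · s_{n-p}(a_1/(2nμ), ..., a_κ/(2nμ)). -/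
/-!
Write `n = m + 1` and `q = n - p`. Expanding `s_{κ-q}` as a sum of squarefree monomials
`t^{𝟙_{Bᶜ}}` with `#B = q`, the coefficient of `t^(n,…,n)` becomes a sum over the `q`-subsets `B`
of the coefficients of `t^(m + 𝟙_B)` in `f_p`. By the multinomial theorem each of these is
`(2μ)^p n_κ! ∏ᵢ aᵢ^m/m! · ∏_{i ∈ B} aᵢ/n`, the exponent sum `κm + q` being exactly `n_κ - p`;
pulling `(2μ)^q` into the last product turns it into the term of `s_q(a/(2nμ))` indexed by `B`.
-/

open Finset MvPolynomial

/-- the `j`-th elementary symmetric function evaluated at rationals `x 1, ..., x κ`. -/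
noncomputable def esymmEvalQ (κ : ℕ) (x : Fin κ → ℚ) (j : ℕ) : ℚ :=
  ∑ A ∈ Finset.powersetCard j (Finset.univ : Finset (Fin κ)), ∏ i ∈ A, x i

open scoped Nat

theorem Finset.sum_powersetCard_compl {α M : Type*} [Fintype α] [DecidableEq α] [AddCommMonoid M]
    {q : ℕ} (hq : q ≤ Fintype.card α) (f : Finset α → M) :
    ∑ A ∈ powersetCard (Fintype.card α - q) univ, f A = ∑ B ∈ powersetCard q univ, f Bᶜ := by
  refine sum_nbij' compl compl (fun A hA => ?_) (fun B hB => ?_) (fun A _ => compl_compl A)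
    (fun B _ => compl_compl B) (fun A _ => by rw [compl_compl])
  · rw [mem_powersetCard_univ] at hA ⊢
    rw [card_compl, hA]; omega
  · rw [mem_powersetCard_univ] at hB ⊢
    rw [card_compl, hB]

namespace MvPolynomial

variable {σ : Type*} [Fintype σ]

theorem coeff_add_sum_single_mul_esymm [DecidableEq σ] {R : Type*} [CommSemiring R]
    (f : MvPolynomial σ R) (e : σ →₀ ℕ) {q : ℕ} (hq : q ≤ Fintype.card σ) :
    coeff (e + ∑ i, Finsupp.single i 1) (f * esymm σ R (Fintype.card σ - q)) =
      ∑ B ∈ powersetCard q univ, coeff (e + ∑ i ∈ B, Finsupp.single i 1) f := by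
  rw [esymm_eq_sum_monomial, sum_powersetCard_compl hq, mul_sum, coeff_sum]
  refine sum_congr rfl fun B _ => ?_
  rw [← sum_add_sum_compl B, ← add_assoc, coeff_mul_monomial, mul_one]

theorem coeff_sum_C_mul_X_pow {K : Type*} [Field K] [CharZero K] (a : σ → K) (e : σ →₀ ℕ)
    (N : ℕ) :
    coeff e ((∑ i, C (a i) * X i) ^ N) =
      if ∑ i, e i = N then N ! * ∏ i, a i ^ e i / (e i)! else 0 := by
  simp_rw [← smul_eq_C_mul]
  rw [coeff_linearCombination_X_pow_of_fintype, Finsupp.sum_fintype _ _ fun _ => rfl,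
    Finsupp.prod_fintype _ _ fun _ => pow_zero _,
    Finsupp.multinomial_eq_of_support_subset (subset_univ e.support)]
  split_ifs with hN
  · have hspec := Nat.multinomial_spec univ e
    rw [hN] at hspec
    have hfact : ∏ i, ((e i)! : K) ≠ 0 :=
      prod_ne_zero_iff.mpr fun i _ => Nat.cast_ne_zero.mpr (Nat.factorial_ne_zero _)
    rw [← hspec, prod_div_distrib]
    push_cast
    field_simp
  · rfl

end MvPolynomial

theorem Finset.prod_pow_div_factorial_add_ite {σ K : Type*} [Fintype σ] [DecidableEq σ] [Field K]
    (a : σ → K) (m : ℕ) (B : Finset σ) :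
    ∏ i, a i ^ (m + if i ∈ B then 1 else 0) / ((m + if i ∈ B then 1 else 0)! : K) =
      (∏ i, a i) ^ m / (m ! : K) ^ Fintype.card σ * ∏ i ∈ B, a i / (m + 1) := by
  rw [← prod_pow, ← card_univ, ← prod_const, ← prod_div_distrib,
    ← prod_ite_mem_eq B fun i => a i / (m + 1), ← prod_mul_distrib]
  refine prod_congr rfl fun i _ => ?_
  split_ifs
  · rw [pow_succ, Nat.factorial_succ, div_mul_div_comm]
    push_cast
    ring
  · simp

theorem coeff_fp_mul_esymm_general (κ n p : ℕ) (hn : 1 ≤ n) (hnκ : n ≤ κ) (hp : p ≤ n)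
    (a : Fin κ → ℕ) (ha_pos : ∀ i, 0 < a i)
    (μ : ℕ) (hμ : μ = ∑ i : Fin κ, (i.1 + 1) * a i)
    (nκ : ℕ) (hnκdef : nκ = n + κ * (n - 1)) :
    MvPolynomial.coeff (Finsupp.equivFunOnFinite.symm (fun _ : Fin κ => n))
      ((MvPolynomial.C (((2 * μ : ℚ) ^ p) *
          ((nκ.factorial : ℚ) / ((nκ - p).factorial : ℚ))) *
        (∑ i : Fin κ, MvPolynomial.C (a i : ℚ) * MvPolynomial.X i) ^ (nκ - p)) *
        MvPolynomial.esymm (Fin κ) ℚ (κ - n + p)) =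
      (2 * μ : ℚ) ^ n * ((nκ.factorial : ℚ) / ((n - 1).factorial : ℚ) ^ κ) *
        (∏ i : Fin κ, (a i : ℚ)) ^ (n - 1) *
        esymmEvalQ κ (fun i => (a i : ℚ) / (2 * n * μ)) (n - p) := by
  obtain ⟨m, rfl⟩ : ∃ m, n = m + 1 := ⟨n - 1, by omega⟩
  simp only [Nat.add_sub_cancel] at hnκdef ⊢
  have hμ0 : (μ : ℚ) ≠ 0 := by
    have : Nonempty (Fin κ) := ⟨⟨0, by omega⟩⟩
    rw [hμ, Nat.cast_ne_zero]
    exact (sum_pos (fun i _ => Nat.mul_pos i.succ_pos (ha_pos i)) univ_nonempty).ne'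
  set e : Fin κ →₀ ℕ := Finsupp.equivFunOnFinite.symm fun _ => m
  have hconst : Finsupp.equivFunOnFinite.symm (fun _ : Fin κ => m + 1) =
      e + ∑ i, Finsupp.single i 1 := by
    ext i; simp [e]
  rw [hconst, show κ - (m + 1) + p = Fintype.card (Fin κ) - (m + 1 - p) by simp; omega,
    coeff_add_sum_single_mul_esymm _ _ (by simp; omega), esymmEvalQ, mul_sum]
  refine sum_congr rfl fun B hB => ?_
  rw [mem_powersetCard_univ] at hB
  have hexp : ∀ i, (e + ∑ j ∈ B, Finsupp.single j 1 : Fin κ →₀ ℕ) i =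
      m + if i ∈ B then 1 else 0 := by
    intro i; simp [e, Finsupp.single_apply]
  have hdeg : ∑ i, (e + ∑ j ∈ B, Finsupp.single j 1 : Fin κ →₀ ℕ) i = nκ - p := by
    simp [hexp, sum_add_distrib, hB]
    omega
  rw [coeff_C_mul, coeff_sum_C_mul_X_pow, if_pos hdeg]
  simp only [hexp]
  rw [prod_pow_div_factorial_add_ite, Fintype.card_fin, prod_div_distrib, prod_div_distrib,
    prod_const, prod_const, hB, ← pow_mul_pow_sub (2 * μ : ℚ) hp]
  push_cast
  simp only [mul_pow]
  field_simp

/-- The coefficient of `t_1^n ⋯ t_κ^n` in `f_p(t) · s_{κ-n+p}(t)`, where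
`f_p(t) = (2μ)^p (n_κ!/(n_κ-p)!) (a_1 t_1 + ⋯ + a_κ t_κ)^{n_κ - p}`, equals
`(2μ)^n (n_κ!/((n-1)!)^κ) (a_1⋯a_κ)^{n-1} s_{n-p}(a_1/(2nμ), ..., a_κ/(2nμ))`. -/
theorem coeff_fp_mul_esymm (κ n p : ℕ) (hn : 1 ≤ n) (hnκ : n ≤ κ) (hp : p ≤ n)
    (a : Fin κ → ℕ) (ha_pos : ∀ i, 0 < a i)
    (ha_anti : ∀ i j : Fin κ, i < j → a j < a i)
    (μ : ℕ) (hμ : μ = ∑ i : Fin κ, (i.1 + 1) * a i)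
    (nκ : ℕ) (hnκdef : nκ = n + κ * (n - 1)) :
    MvPolynomial.coeff (Finsupp.equivFunOnFinite.symm (fun _ : Fin κ => n))
      ((MvPolynomial.C (((2 * μ : ℚ) ^ p) *
          ((nκ.factorial : ℚ) / ((nκ - p).factorial : ℚ))) *
        (∑ i : Fin κ, MvPolynomial.C (a i : ℚ) * MvPolynomial.X i) ^ (nκ - p)) *
        MvPolynomial.esymm (Fin κ) ℚ (κ - n + p)) =
      (2 * μ : ℚ) ^ n * ((nκ.factorial : ℚ) / ((n - 1).factorial : ℚ) ^ κ) *
        (∏ i : Fin κ, (a i : ℚ)) ^ (n - 1) *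
        esymmEvalQ κ (fun i => (a i : ℚ) / (2 * n * μ)) (n - p) :=
  coeff_fp_mul_esymm_general κ n p hn hnκ hp a ha_pos μ hμ nκ hnκdef
end

section
/- Under the setup of the previous statement, defining Ĩ_p = [t_1^n ⋯ t_κ^n](f_p(t) · s_{κ-n+p}(t)), one has Ĩ_p = s_{n-p}(a_1/(2nμ), ..., a_κ/(2nμ)) · Ĩ_n, where Ĩ_n = (2μ)^n · (n_κ!/((n-1)!)^κ) · (a_1⋯a_κ)^{n-1}. -/
open Finset MvPolynomial

open scoped Nat

/-! Expanding `s_{κ-n+p}` into squarefree monomials `t^A`, the coefficient of `t_1^n ⋯ t_κ^n`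
in `f_p(t) t^A` is a multinomial coefficient of `(Σ a_i t_i)^{n_κ-p}` at the exponent that is
`n - 1` on `A` and `n` off `A`. Writing `B = Aᶜ` (so `|B| = n - p`), it equals
`(n_κ-p)! / ((n-1)!^κ n^{|B|}) · (a_1⋯a_κ)^{n-1} · ∏_{i∈B} a_i`, which after multiplying by
`(2μ)^p n_κ!/(n_κ-p)!` is exactly the `B`-term of `s_{n-p}(a/(2nμ)) · Ĩ_n`. -/

theorem Finset.sum_powersetCard_univ_eq_sum_compl {α M : Type*} [Fintype α] [DecidableEq α]
    [AddCommMonoid M] {k l : ℕ} (hkl : k + l = Fintype.card α) (f : Finset α → M) :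
    ∑ A ∈ powersetCard k univ, f A = ∑ B ∈ powersetCard l univ, f Bᶜ := by
  refine sum_nbij' compl compl ?_ ?_ (fun A _ => compl_compl A) (fun B _ => compl_compl B)
    fun A _ => by rw [compl_compl]
  all_goals
    intro A hA
    rw [mem_powersetCard_univ] at hA ⊢
    rw [card_compl]
    omega

namespace MvPolynomial

variable {σ : Type*} [Fintype σ]

theorem coeff_mul_esymm {R : Type*} [CommSemiring R] (P : MvPolynomial σ R) (k : ℕ) {m : σ →₀ ℕ}
    (hm : ∀ i, m i ≠ 0) :
    coeff m (P * esymm σ R k) =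
      ∑ A ∈ powersetCard k univ, coeff (m - ∑ i ∈ A, Finsupp.single i 1) P := by
  classical
  rw [esymm_eq_sum_monomial, mul_sum, coeff_sum]
  refine sum_congr rfl fun A _ => ?_
  have hle : ∑ i ∈ A, Finsupp.single i 1 ≤ m := fun j => by
    rw [Finsupp.finsetSum_apply]
    simp only [Finsupp.single_apply, sum_ite_eq']
    have := hm j
    split_ifs <;> omega
  rw [coeff_mul_monomial', if_pos hle, mul_one]

theorem coeff_sum_C_mul_X_pow_of_eq_add_indicator [DecidableEq σ] {K : Type*} [Field K]
    [CharZero K] (a : σ → K) (e : ℕ) (B : Finset σ) {d : σ →₀ ℕ}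
    (hd : ∀ i, d i = e + if i ∈ B then 1 else 0) :
    coeff d ((∑ i, C (a i) * X i) ^ (Fintype.card σ * e + #B)) =
      (Fintype.card σ * e + #B)! / ((e ! : K) ^ Fintype.card σ * (e + 1) ^ #B) *
        (∏ i, a i) ^ e * ∏ i ∈ B, a i := by
  have hsum : ∑ i, d i = Fintype.card σ * e + #B := by
    simp [hd, sum_add_distrib]
  have hfact : ∏ i, ((d i)! : K) = (e ! : K) ^ Fintype.card σ * (e + 1) ^ #B := by
    have hfact_i : ∀ i, ((d i)! : K) = e ! * (e + 1) ^ (if i ∈ B then 1 else 0) := fun i => by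
      rw [hd]
      split_ifs <;> simp [Nat.factorial_succ, mul_comm]
    rw [prod_congr rfl fun i _ => hfact_i i, prod_mul_distrib, prod_const, prod_pow_eq_pow_sum,
      sum_boole]
    simp
  have hmult : (d.multinomial : K) =
      (Fintype.card σ * e + #B)! / ((e ! : K) ^ Fintype.card σ * (e + 1) ^ #B) := by
    rw [eq_div_iff (by simp [Nat.factorial_ne_zero, Nat.cast_add_one_ne_zero]), mul_comm, ← hfact,
      Finsupp.multinomial_eq_of_support_subset (subset_univ _), ← hsum]
    exact_mod_cast Nat.multinomial_spec univ d
  have hpow : d.prod (fun i m => a i ^ m) = (∏ i, a i) ^ e * ∏ i ∈ B, a i := by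
    rw [Finsupp.prod_fintype _ _ fun _ => pow_zero _]
    simp only [hd, pow_add, prod_mul_distrib, prod_pow, pow_ite, pow_one, pow_zero, prod_ite_mem,
      univ_inter]
  simp_rw [← smul_eq_C_mul]
  rw [coeff_linearCombination_X_pow_of_fintype, Finsupp.sum_fintype _ _ fun _ => rfl, if_pos hsum,
    hmult, hpow, mul_assoc]

end MvPolynomial

theorem Itilde_eq_general (κ n p : ℕ) (hn : 1 ≤ n) (hnκ : n ≤ κ) (hp : p ≤ n)
    (a : Fin κ → ℕ) (ha_pos : ∀ i, 0 < a i)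
    (μ : ℕ) (hμ : μ = ∑ i : Fin κ, (i.1 + 1) * a i)
    (nκ : ℕ) (hnκdef : nκ = n + κ * (n - 1))
    (Itilde : ℕ → ℚ)
    (hItilde : ∀ q ≤ n, Itilde q =
      MvPolynomial.coeff (Finsupp.equivFunOnFinite.symm (fun _ : Fin κ => n))
        ((MvPolynomial.C (((2 * μ : ℚ) ^ q) *
            ((nκ.factorial : ℚ) / ((nκ - q).factorial : ℚ))) *
          (∑ i : Fin κ, MvPolynomial.C (a i : ℚ) * MvPolynomial.X i) ^ (nκ - q)) *
          MvPolynomial.esymm (Fin κ) ℚ (κ - n + q)))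
    (ItildeN : ℚ)
    (hItildeN : ItildeN = (2 * μ : ℚ) ^ n *
      ((nκ.factorial : ℚ) / ((n - 1).factorial : ℚ) ^ κ) *
      (∏ i : Fin κ, (a i : ℚ)) ^ (n - 1)) :
    Itilde p = esymmEvalQ κ (fun i => (a i : ℚ) / (2 * n * μ)) (n - p) * ItildeN := by
  obtain ⟨e, rfl⟩ : ∃ e, n = e + 1 := ⟨n - 1, by omega⟩
  have hμ_pos : 0 < μ := hμ ▸ sum_pos (fun i _ => Nat.mul_pos i.1.succ_pos (ha_pos i))
    (univ_nonempty_iff.2 ⟨⟨0, by omega⟩⟩)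
  rw [hItilde p hp, mul_assoc, coeff_C_mul, coeff_mul_esymm _ _ fun _ => by simp, mul_sum,
    sum_powersetCard_univ_eq_sum_compl (l := e + 1 - p) (by simp; omega), esymmEvalQ, sum_mul]
  refine sum_congr rfl fun B hB => ?_
  rw [mem_powersetCard_univ] at hB
  have hdeg : nκ - p = Fintype.card (Fin κ) * e + #B := by
    simp only [hnκdef, Fintype.card_fin, hB, add_tsub_cancel_right]
    omega
  rw [hdeg, coeff_sum_C_mul_X_pow_of_eq_add_indicator _ e B fun i => ?_]
  · obtain ⟨q, hq⟩ : ∃ q, e + 1 = p + q := ⟨e + 1 - p, by omega⟩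
    have hμ2 : (2 * μ : ℚ) ^ (e + 1) = (2 * μ) ^ p * (2 * μ) ^ q := by rw [← pow_add, hq]
    rw [hItildeN, prod_div_distrib, prod_const, ← hdeg, hB, hμ2, show e + 1 - p = q by omega]
    simp only [Fintype.card_fin, add_tsub_cancel_right]
    push_cast
    simp only [mul_pow]
    field_simp
  · rw [Finsupp.tsub_apply, Finsupp.finsetSum_apply]
    simp only [Finsupp.single_apply, sum_ite_eq', mem_compl, Finsupp.coe_equivFunOnFinite_symm]
    split_ifs <;> omega

/-- With `Ĩ_p = [t_1^n ⋯ t_κ^n](f_p(t) · s_{κ-n+p}(t))`, one has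
`Ĩ_p = s_{n-p}(a_1/(2nμ), ..., a_κ/(2nμ)) · Ĩ_n`, where
`Ĩ_n = (2μ)^n (n_κ!/((n-1)!)^κ) (a_1⋯a_κ)^{n-1}`. -/
theorem Itilde_eq (κ n p : ℕ) (hn : 1 ≤ n) (hnκ : n ≤ κ) (hp : p ≤ n)
    (a : Fin κ → ℕ) (ha_pos : ∀ i, 0 < a i)
    (ha_anti : ∀ i j : Fin κ, i < j → a j < a i)
    (μ : ℕ) (hμ : μ = ∑ i : Fin κ, (i.1 + 1) * a i)
    (nκ : ℕ) (hnκdef : nκ = n + κ * (n - 1))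
    (Itilde : ℕ → ℚ)
    (hItilde : ∀ q ≤ n, Itilde q =
      MvPolynomial.coeff (Finsupp.equivFunOnFinite.symm (fun _ : Fin κ => n))
        ((MvPolynomial.C (((2 * μ : ℚ) ^ q) *
            ((nκ.factorial : ℚ) / ((nκ - q).factorial : ℚ))) *
          (∑ i : Fin κ, MvPolynomial.C (a i : ℚ) * MvPolynomial.X i) ^ (nκ - q)) *
          MvPolynomial.esymm (Fin κ) ℚ (κ - n + q)))
    (ItildeN : ℚ)
    (hItildeN : ItildeN = (2 * μ : ℚ) ^ n *
      ((nκ.factorial : ℚ) / ((n - 1).factorial : ℚ) ^ κ) *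
      (∏ i : Fin κ, (a i : ℚ)) ^ (n - 1)) :
    Itilde p = esymmEvalQ κ (fun i => (a i : ℚ) / (2 * n * μ)) (n - p) * ItildeN :=
  Itilde_eq_general κ n p hn hnκ hp a ha_pos μ hμ nκ hnκdef Itilde hItilde ItildeN hItildeN
end

section
/- For κ = n and the geometric choice a_i = n^{n-i} (i = 1,...,n), the quantity λ̃ = 4nμ · s_{n-1}(a)/s_n(a), where μ = Σ_{i=1}^n i·a_i, satisfies 4 ≤ λ̃ / n^n ≤ 4 (n/(n-1))^3, for n ≥ 2. -/
open Finset

/-!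
With `x = 1/n`, `s_{n-1}(a)/s_n(a) = ∑ 1/a_i = ∑_{k<n} x^k` lies between `1` and `1/(1-x)`, and
`μ/n^n = ∑_{i<n} (i+1) x^(i+1)` lies between `x` and `∑_i i x^i = x/(1-x)^2`. Hence
`λ̃/n^n = 4 n (μ/n^n) (s_{n-1}/s_n)` lies between `4 n x = 4` and `4 n x/(1-x)^3 = 4 (n/(n-1))^3`.
-/

theorem esymmEval_self (κ : ℕ) (x : Fin κ → ℝ) : esymmEval κ x κ = ∏ i, x i := by
  have h := powersetCard_self (univ : Finset (Fin κ))
  rw [card_fin] at h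
  rw [esymmEval, h, sum_singleton]

theorem esymmEval_pred {κ : ℕ} (hκ : 0 < κ) (x : Fin κ → ℝ) :
    esymmEval κ x (κ - 1) = ∑ j, ∏ i ∈ {j}ᶜ, x i := by
  have h : ∑ j, ∏ i ∈ {j}ᶜ, x i = ∑ B ∈ powersetCard 1 univ, ∏ i ∈ Bᶜ, x i := by
    rw [powersetCard_one, sum_map]
    rfl
  rw [esymmEval, h]
  refine sum_nbij' compl compl (fun A hA => ?_) (fun A hA => ?_) (fun A _ => compl_compl A)
    (fun A _ => compl_compl A) (fun A _ => by rw [compl_compl])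
  · rw [mem_powersetCard] at hA ⊢
    refine ⟨subset_univ _, ?_⟩
    rw [card_compl, Fintype.card_fin, hA.2]
    omega
  · rw [mem_powersetCard] at hA ⊢
    refine ⟨subset_univ _, ?_⟩
    rw [card_compl, Fintype.card_fin, hA.2]

theorem esymmEval_pred_div_self {κ : ℕ} (hκ : 0 < κ) {x : Fin κ → ℝ} (hx : ∀ i, x i ≠ 0) :
    esymmEval κ x (κ - 1) / esymmEval κ x κ = ∑ j, (x j)⁻¹ := by
  rw [esymmEval_pred hκ, esymmEval_self, sum_div]
  refine sum_congr rfl fun j _ => ?_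
  rw [← prod_mul_prod_compl {j} x, prod_singleton,
    div_mul_cancel_right₀ (prod_ne_zero_iff.2 fun i _ => hx i)]

theorem geom_sum_le_inv_one_sub {x : ℝ} (hx₀ : 0 ≤ x) (hx₁ : x < 1) (n : ℕ) :
    ∑ i ∈ range n, x ^ i ≤ (1 - x)⁻¹ :=
  sum_le_hasSum _ (fun i _ => by positivity) (hasSum_geometric_of_lt_one hx₀ hx₁)

theorem sum_range_succ_mul_pow_le {x : ℝ} (hx₀ : 0 ≤ x) (hx₁ : x < 1) (n : ℕ) :
    ∑ i ∈ range n, (i + 1 : ℝ) * x ^ (i + 1) ≤ x / (1 - x) ^ 2 := by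
  have hsum := hasSum_coe_mul_geometric_of_norm_lt_one (r := x) (by rwa [Real.norm_of_nonneg hx₀])
  calc ∑ i ∈ range n, (i + 1 : ℝ) * x ^ (i + 1) = ∑ i ∈ range (n + 1), (i : ℝ) * x ^ i := by
        simp [sum_range_succ']
    _ ≤ x / (1 - x) ^ 2 := sum_le_hasSum _ (fun i _ => by positivity) hsum

theorem one_le_geom_sum {x : ℝ} (hx : 0 ≤ x) {n : ℕ} (hn : 0 < n) :
    1 ≤ ∑ i ∈ range n, x ^ i := by
  simpa using single_le_sum (fun i _ => pow_nonneg hx i) (mem_range.2 hn)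

theorem le_sum_range_succ_mul_pow {x : ℝ} (hx : 0 ≤ x) {n : ℕ} (hn : 0 < n) :
    x ≤ ∑ i ∈ range n, (i + 1 : ℝ) * x ^ (i + 1) := by
  simpa using single_le_sum (f := fun i : ℕ => (i + 1 : ℝ) * x ^ (i + 1))
    (fun i _ => by positivity) (mem_range.2 hn)

theorem sum_inv_pow_sub_one_sub (N : ℝ) (n : ℕ) :
    ∑ j : Fin n, (N ^ (n - 1 - j.1))⁻¹ = ∑ i ∈ range n, N⁻¹ ^ i := by
  rw [Fin.sum_univ_eq_sum_range (fun j => (N ^ (n - 1 - j))⁻¹),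
    sum_range_reflect (fun i => (N ^ i)⁻¹)]
  simp only [inv_pow]

theorem sum_succ_mul_pow_sub_one_sub {N : ℝ} (hN : N ≠ 0) (n : ℕ) :
    ∑ j : Fin n, (j.1 + 1 : ℝ) * N ^ (n - 1 - j.1)
      = N ^ n * ∑ i ∈ range n, (i + 1 : ℝ) * N⁻¹ ^ (i + 1) := by
  rw [Fin.sum_univ_eq_sum_range (fun j => (j + 1 : ℝ) * N ^ (n - 1 - j)), mul_sum]
  refine sum_congr rfl fun i hi => ?_
  have hsplit : n = (n - 1 - i) + (i + 1) := by grind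
  conv_rhs => rw [hsplit, pow_add, inv_pow]
  field_simp

/-- For `κ = n` and the geometric choice `a_i = n^{n-i}`, the quantity
`λ̃ = 4nμ s_{n-1}(a)/s_n(a)` satisfies `4 ≤ λ̃/n^n ≤ 4 (n/(n-1))^3` for `n ≥ 2`. -/
theorem lambda_tilde_bounds (n : ℕ) (hn : 2 ≤ n)
    (a : Fin n → ℝ) (ha : ∀ i : Fin n, a i = (n : ℝ) ^ (n - 1 - i.1))
    (μ : ℝ) (hμ : μ = ∑ i : Fin n, (i.1 + 1 : ℝ) * a i)
    (lam : ℝ)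
    (hlam : lam = 4 * n * μ * (esymmEval n a (n - 1) / esymmEval n a n)) :
    4 ≤ lam / (n : ℝ) ^ n ∧ lam / (n : ℝ) ^ n ≤ 4 * ((n : ℝ) / (n - 1)) ^ 3 := by
  have hN : (2 : ℝ) ≤ n := by exact_mod_cast hn
  have hn₀ : 0 < n := by omega
  have hx₀ : 0 ≤ (n : ℝ)⁻¹ := by positivity
  have hx₁ : (n : ℝ)⁻¹ < 1 := inv_lt_one_of_one_lt₀ (by linarith)
  set S := ∑ i ∈ range n, (n : ℝ)⁻¹ ^ i
  set T := ∑ i ∈ range n, (i + 1 : ℝ) * (n : ℝ)⁻¹ ^ (i + 1)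
  have hS : esymmEval n a (n - 1) / esymmEval n a n = S := by
    rw [esymmEval_pred_div_self hn₀ fun i => by rw [ha]; positivity]
    simp only [ha, S, sum_inv_pow_sub_one_sub]
  have hμ' : μ = n ^ n * T := by
    simp only [hμ, ha, T, sum_succ_mul_pow_sub_one_sub (by positivity : (n : ℝ) ≠ 0)]
  have hlam' : lam / (n : ℝ) ^ n = 4 * (n * T) * S := by
    rw [hlam, hS, hμ', div_eq_iff (by positivity)]
    ring
  rw [hlam']
  constructor
  · calc (4 : ℝ) = 4 * (n * (n : ℝ)⁻¹) * 1 := by field_simp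
      _ ≤ 4 * (n * T) * S := by
        gcongr
        · exact le_sum_range_succ_mul_pow hx₀ hn₀
        · exact one_le_geom_sum hx₀ hn₀
  · calc 4 * (n * T) * S
        ≤ 4 * (n * ((n : ℝ)⁻¹ / (1 - (n : ℝ)⁻¹) ^ 2)) * (1 - (n : ℝ)⁻¹)⁻¹ := by
          gcongr
          · exact sum_range_succ_mul_pow_le hx₀ hx₁ n
          · exact geom_sum_le_inv_one_sub hx₀ hx₁ n
      _ = 4 * ((n : ℝ) / (n - 1)) ^ 3 := by
          field_simp
end

section
/- For n ≥ 6 and a_i = n^{n-i} (i=1,...,n), the product Ĉ := Π_{k=1}^{n-1} ((n^k - 1)^{n-k}) / ((n^k - 2)(n^k - (2 + 1/n))^{n-1-k}) satisfies Ĉ ≤ 5. -/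
open Finset Real

/-!
Since `n^k - 2 ≥ n^k - (2 + 1/n)`, the `k`-th factor is at most
`((n^k - 1)/(n^k - 2 - 1/n))^(n-k) ≤ exp ((n-k)(1 + 1/n)/(n^k - 2 - 1/n))`, so `Ĉ ≤ exp S`.
For `n ≥ 7` the `k = 1` term of `S` is `(n² - 1)/(n² - 2n - 1) ≤ 24/17`, and the terms with
`k ≥ 2` are dominated by `(49/46)(n - 1)/n^k`, whose sum is at most `7/46`; hence `S ≤ 11/7`
and `exp (11/7) < 5`. At `n = 6` this estimate exceeds `5`, and the product is evaluated directly.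
-/

lemma exp_eleven_sevenths_lt_five : exp (11 / 7) < 5 := by
  have h := exp_bound' (x := 4 / 7) (by norm_num) (by norm_num) (n := 4) (by norm_num)
  norm_num [sum_range_succ, Nat.factorial] at h
  have hsplit : exp (11 / 7) = exp 1 * exp (4 / 7) := by rw [← exp_add]; norm_num
  rw [hsplit]
  nlinarith [exp_one_lt_d9, exp_pos 1, exp_pos (4 / 7)]

lemma pow_div_mul_pow_le_exp {a d : ℝ} (hd : 2 ≤ d) (hda : d < a) {j : ℕ} (hj : j ≠ 0) :
    (a - 1) ^ j / ((a - 2) * (a - d) ^ (j - 1)) ≤ exp (j * ((d - 1) / (a - d))) := by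
  have had : 0 < a - d := sub_pos.2 hda
  calc (a - 1) ^ j / ((a - 2) * (a - d) ^ (j - 1))
      ≤ (a - 1) ^ j / (a - d) ^ j := by
        have hnum : 0 ≤ (a - 1) ^ j := pow_nonneg (by linarith) j
        rw [← pow_sub_one_mul hj (a - d), mul_comm _ (a - d)]
        gcongr
    _ = (1 + (d - 1) / (a - d)) ^ j := by
        rw [← div_pow]
        congr 1
        field_simp
        ring
    _ ≤ exp ((d - 1) / (a - d)) ^ j := by
        gcongr
        · exact add_nonneg zero_le_one (div_nonneg (by linarith) had.le)
        · linarith [add_one_le_exp ((d - 1) / (a - d))]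
    _ = exp (j * ((d - 1) / (a - d))) := (exp_nat_mul _ _).symm

lemma two_add_inv_lt_pow {n : ℕ} (hn : 3 ≤ n) {k : ℕ} (hk : k ≠ 0) :
    2 + 1 / (n : ℝ) < (n : ℝ) ^ k := by
  have hN : (3 : ℝ) ≤ n := by exact_mod_cast hn
  have hinv : 1 / (n : ℝ) < 1 := (div_lt_one (by linarith)).2 (by linarith)
  calc 2 + 1 / (n : ℝ) < 3 := by linarith
    _ ≤ n := hN
    _ ≤ (n : ℝ) ^ k := le_self_pow₀ (by linarith) hk

namespace Chat

lemma prod_le_exp_sum {n : ℕ} (hn : 3 ≤ n) :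
    ∏ k ∈ Icc 1 (n - 1),
      ((n : ℝ) ^ k - 1) ^ (n - k) /
        (((n : ℝ) ^ k - 2) * ((n : ℝ) ^ k - (2 + 1 / n)) ^ (n - 1 - k)) ≤
      exp (∑ k ∈ Icc 1 (n - 1),
        ((n - k : ℕ) : ℝ) * ((1 + 1 / (n : ℝ)) / ((n : ℝ) ^ k - (2 + 1 / n)))) := by
  rw [exp_sum]
  have hbounds : ∀ k ∈ Icc 1 (n - 1), 2 + 1 / (n : ℝ) < (n : ℝ) ^ k ∧ n - k ≠ 0 :=
    fun k hk => have := mem_Icc.1 hk; ⟨two_add_inv_lt_pow hn (by omega), by omega⟩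
  have hinv : 0 < 1 / (n : ℝ) := by positivity
  refine prod_le_prod (fun k hk => ?_) (fun k hk => ?_)
  · obtain ⟨hlt, -⟩ := hbounds k hk
    apply div_nonneg
    · exact pow_nonneg (by linarith) _
    · exact mul_nonneg (by linarith) (pow_nonneg (by linarith) _)
  · obtain ⟨hlt, hkn⟩ := hbounds k hk
    have h := pow_div_mul_pow_le_exp (by linarith) hlt hkn
    rwa [Nat.sub_right_comm, show (2 : ℝ) + 1 / n - 1 = 1 + 1 / n by ring] at h

lemma first_term_le {N : ℝ} (hN : 7 ≤ N) :
    (N - 1) * ((1 + 1 / N) / (N - (2 + 1 / N))) ≤ 24 / 17 := by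
  have hpos : 0 < N ^ 2 - 2 * N - 1 := by nlinarith
  have hform : (N - 1) * ((1 + 1 / N) / (N - (2 + 1 / N))) =
      (N ^ 2 - 1) / (N ^ 2 - 2 * N - 1) := by
    field_simp
    ring
  rw [hform, div_le_div_iff₀ hpos (by norm_num)]
  nlinarith

lemma tail_term_le {N a m : ℝ} (hN : 7 ≤ N) (ha : 49 ≤ a) (hm : m ≤ N - 2) :
    m * ((1 + 1 / N) / (a - (2 + 1 / N))) ≤ 49 / 46 * (N - 1) / a := by
  have hinv : 1 / N ≤ 1 / 7 := one_div_le_one_div_of_le (by norm_num) hN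
  have hden : 46 / 49 * a ≤ a - (2 + 1 / N) := by linarith
  have hnum : (N - 2) * (1 + 1 / N) ≤ N - 1 := by
    have : (N - 2) * (1 / N) ≤ 1 := by
      rw [mul_one_div, div_le_one (by linarith)]
      linarith
    linarith
  calc m * ((1 + 1 / N) / (a - (2 + 1 / N)))
      ≤ (N - 2) * ((1 + 1 / N) / (46 / 49 * a)) :=
        mul_le_mul hm (div_le_div_of_nonneg_left (by positivity) (by positivity) hden)
          (div_nonneg (by positivity) (by linarith)) (by linarith)
    _ = (N - 2) * (1 + 1 / N) / (46 / 49 * a) := by ring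
    _ ≤ (N - 1) / (46 / 49 * a) := by gcongr
    _ = 49 / 46 * (N - 1) / a := by field_simp

lemma geom_tail_le {N : ℝ} (hN : 7 ≤ N) (n : ℕ) :
    ∑ k ∈ Ico 2 n, 49 / 46 * (N - 1) / N ^ k ≤ 7 / 46 := by
  have hN0 : 0 < N := by linarith
  have hN1 : N - 1 ≠ 0 := by linarith
  have hgeom := geom_sum_Ico_le_of_lt_one (m := 2) (n := n) (inv_nonneg.2 hN0.le)
    (inv_lt_one_of_one_lt₀ (by linarith))
  calc ∑ k ∈ Ico 2 n, 49 / 46 * (N - 1) / N ^ k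
      = 49 / 46 * (N - 1) * ∑ k ∈ Ico 2 n, N⁻¹ ^ k := by
        rw [mul_sum]
        simp only [inv_pow, div_eq_mul_inv]
    _ ≤ 49 / 46 * (N - 1) * (N⁻¹ ^ 2 / (1 - N⁻¹)) := by
        gcongr
        linarith
    _ = 49 / 46 / N := by field_simp
    _ ≤ 7 / 46 := by
        rw [div_le_div_iff₀ hN0 (by norm_num)]
        linarith

lemma exponent_le {n : ℕ} (hn : 7 ≤ n) :
    ∑ k ∈ Icc 1 (n - 1),
      ((n - k : ℕ) : ℝ) * ((1 + 1 / (n : ℝ)) / ((n : ℝ) ^ k - (2 + 1 / n))) ≤ 11 / 7 := by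
  have hN : (7 : ℝ) ≤ n := by exact_mod_cast hn
  have hIcc : Icc 1 (n - 1) = insert 1 (Ico 2 n) := by
    ext k
    simp only [mem_Icc, mem_insert, mem_Ico]
    omega
  rw [hIcc, sum_insert (by simp)]
  have hfirst :
      ((n - 1 : ℕ) : ℝ) * ((1 + 1 / (n : ℝ)) / ((n : ℝ) ^ 1 - (2 + 1 / n))) ≤ 24 / 17 := by
    rw [Nat.cast_sub (by omega), Nat.cast_one, pow_one]
    exact first_term_le hN
  have htail : ∑ k ∈ Ico 2 n,
      ((n - k : ℕ) : ℝ) * ((1 + 1 / (n : ℝ)) / ((n : ℝ) ^ k - (2 + 1 / n))) ≤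
      ∑ k ∈ Ico 2 n, 49 / 46 * ((n : ℝ) - 1) / (n : ℝ) ^ k := by
    refine sum_le_sum fun k hk => tail_term_le hN ?_ ?_
    · have hk := (mem_Ico.1 hk).1
      calc (49 : ℝ) ≤ (n : ℝ) ^ 2 := by nlinarith
        _ ≤ (n : ℝ) ^ k := pow_le_pow_right₀ (by linarith) hk
    · have hk := mem_Ico.1 hk
      rw [Nat.cast_sub hk.2.le]
      have : (2 : ℝ) ≤ k := by exact_mod_cast hk.1
      linarith
  linarith [geom_tail_le hN n]

end Chat

/-- For `n ≥ 6`, the product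
`Ĉ = Π_{k=1}^{n-1} (n^k - 1)^{n-k} / ((n^k - 2)(n^k - (2 + 1/n))^{n-1-k})`
satisfies `Ĉ ≤ 5`. -/
theorem Chat_le_five (n : ℕ) (hn : 6 ≤ n) :
    ∏ k ∈ Finset.Icc 1 (n - 1),
      ((n : ℝ) ^ k - 1) ^ (n - k) /
        (((n : ℝ) ^ k - 2) * ((n : ℝ) ^ k - (2 + 1 / n)) ^ (n - 1 - k)) ≤ 5 := by
  rcases hn.eq_or_lt with rfl | h7
  · norm_num [show Icc 1 5 = {1, 2, 3, 4, 5} from rfl]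
  · calc _ ≤ _ := Chat.prod_le_exp_sum (by omega)
      _ ≤ exp (11 / 7) := exp_le_exp.2 (Chat.exponent_le h7)
      _ ≤ 5 := exp_eleven_sevenths_lt_five.le
end

section
/- For n ≥ 6, the ratio Π_{k=2}^{n} (1 + 2/(n^k - 2n - 1))^{n-k} is at most 3/2. -/
/-!
From `1 + x ≤ exp x` the product is at most `exp (∑ (n - k) * 2 / (n ^ k - 2n - 1))`.
Since `n ^ k - 2n - 1 ≥ n ^ (k - 2) * (n ^ 2 - 2n - 1)`, splitting off `k = 2` and bounding the
weights `n - k` by `n - 3` for `k ≥ 3` leaves a geometric series, and the sum is at most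
`2 / (n ^ 2 - 2n - 1) * ((n - 2) + (n - 3) / (n - 1)) = 2 / (n - 1) ≤ 2 / 5`; finally
`exp (2 / 5) ≤ 3 / 2` because `e ^ 2 ≤ (3 / 2) ^ 5`.
-/

open Finset Real

lemma one_add_pow_le_exp_mul {x : ℝ} (hx : 0 ≤ 1 + x) (m : ℕ) :
    (1 + x) ^ m ≤ exp (m * x) := by
  rw [exp_nat_mul]
  exact pow_le_pow_left₀ hx (by linarith [add_one_le_exp x]) m

lemma prod_one_add_pow_le_exp_sum {ι : Type*} (s : Finset ι) (x : ι → ℝ) (m : ι → ℕ)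
    (hx : ∀ i ∈ s, 0 ≤ 1 + x i) :
    ∏ i ∈ s, (1 + x i) ^ m i ≤ exp (∑ i ∈ s, (m i : ℝ) * x i) := by
  rw [exp_sum]
  exact prod_le_prod (fun i hi => pow_nonneg (hx i hi) _)
    fun i hi => one_add_pow_le_exp_mul (hx i hi) (m i)

lemma pow_mul_sq_sub_le {x : ℝ} (hx : 1 ≤ x) {k : ℕ} (hk : 2 ≤ k) :
    x ^ k * (x ^ 2 - 2 * x - 1) ≤ x ^ 2 * (x ^ k - 2 * x - 1) := by
  have hxk : x ^ 2 ≤ x ^ k := pow_le_pow_right₀ hx hk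
  nlinarith

lemma pow_sub_two_mul_sub_one_pos {x : ℝ} (hx : 3 ≤ x) {k : ℕ} (hk : 2 ≤ k) :
    0 < x ^ k - 2 * x - 1 := by
  nlinarith [pow_le_pow_right₀ (by linarith : 1 ≤ x) hk]

lemma two_div_pow_sub_le {x : ℝ} (hx : 3 ≤ x) {k : ℕ} (hk : 2 ≤ k) :
    2 / (x ^ k - 2 * x - 1) ≤ 2 * x ^ 2 / (x ^ 2 - 2 * x - 1) * x⁻¹ ^ k := by
  have hD := pow_sub_two_mul_sub_one_pos hx le_rfl
  have hDk := pow_sub_two_mul_sub_one_pos hx hk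
  rw [inv_pow, ← div_eq_mul_inv, div_div, div_le_div_iff₀ hDk (by positivity)]
  nlinarith [pow_mul_sq_sub_le (by linarith : 1 ≤ x) hk]

lemma sum_Icc_sub_mul_two_div_le {n : ℕ} (hn : 3 ≤ n) :
    ∑ k ∈ Icc 2 n, ((n - k : ℕ) : ℝ) * (2 / ((n : ℝ) ^ k - 2 * n - 1)) ≤ 2 / (n - 1) := by
  have hx : (3 : ℝ) ≤ n := by exact_mod_cast hn
  have hD := pow_sub_two_mul_sub_one_pos hx le_rfl
  have htail : ∑ k ∈ Ioc 2 n, ((n - k : ℕ) : ℝ) * (2 / ((n : ℝ) ^ k - 2 * n - 1))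
      ≤ (n - 3) * (2 * n ^ 2 / (n ^ 2 - 2 * n - 1) * ((n : ℝ)⁻¹ ^ 3 / (1 - (n : ℝ)⁻¹))) := calc
    _ ≤ ∑ k ∈ Ioc 2 n, ((n - 3 : ℕ) : ℝ) * (2 * n ^ 2 / (n ^ 2 - 2 * n - 1) * (n : ℝ)⁻¹ ^ k) := by
      refine sum_le_sum fun k hk => ?_
      have hk := mem_Ioc.mp hk
      have := pow_sub_two_mul_sub_one_pos hx (k := k) (by omega)
      exact mul_le_mul (by exact_mod_cast Nat.sub_le_sub_left hk.1 n)
        (two_div_pow_sub_le hx (by omega)) (by positivity) (by positivity)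
    _ = (n - 3) * (2 * n ^ 2 / (n ^ 2 - 2 * n - 1) * ∑ k ∈ Ico 3 (n + 1), (n : ℝ)⁻¹ ^ k) := by
      rw [← mul_sum, ← mul_sum, Nat.cast_sub hn, ← Ico_add_one_add_one_eq_Ioc]
      rfl
    _ ≤ _ := by
      have : (0 : ℝ) ≤ n - 3 := by linarith
      gcongr
      exact geom_sum_Ico_le_of_lt_one (by positivity) (inv_lt_one_of_one_lt₀ (by linarith))
  rw [← sum_Ioc_add_eq_sum_Icc (by omega : 2 ≤ n), Nat.cast_sub (by omega : 2 ≤ n), Nat.cast_ofNat]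
  calc _ ≤ (n - 3) * (2 * n ^ 2 / (n ^ 2 - 2 * n - 1) * ((n : ℝ)⁻¹ ^ 3 / (1 - (n : ℝ)⁻¹)))
        + ((n : ℝ) - 2) * (2 / ((n : ℝ) ^ 2 - 2 * n - 1)) := by
        gcongr
    _ = 2 / (n - 1) := by
      have : (n : ℝ) - 1 ≠ 0 := by linarith
      have : (n : ℝ) ≠ 0 := by linarith
      field_simp
      rw [div_eq_one_iff_eq (by linarith)]
      ring

lemma exp_two_fifths_le : exp (2 / 5) ≤ 3 / 2 := by
  have he : exp 2 ≤ (3 / 2 : ℝ) ^ 5 := by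
    have h1 : exp 1 < 2.7182818286 := exp_one_lt_d9
    rw [show (2 : ℝ) = 1 + 1 by norm_num, exp_add]
    nlinarith [exp_pos 1]
  refine le_of_pow_le_pow_left₀ (n := 5) (by norm_num) (by norm_num) ?_
  rwa [← exp_nat_mul, show ((5 : ℕ) : ℝ) * (2 / 5) = 2 by norm_num]

/-- For `n ≥ 6`, the ratio `Π_{k=2}^n (1 + 2/(n^k - 2n - 1))^{n-k}` is at most `3/2`. -/
theorem ratio_le (n : ℕ) (hn : 6 ≤ n) :
    ∏ k ∈ Finset.Icc 2 n, (1 + 2 / ((n : ℝ) ^ k - 2 * n - 1)) ^ (n - k) ≤ 3 / 2 := by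
  have hx : (6 : ℝ) ≤ n := by exact_mod_cast hn
  have hterm : ∀ k ∈ Icc 2 n, 0 ≤ 1 + 2 / ((n : ℝ) ^ k - 2 * n - 1) := fun k hk => by
    have := pow_sub_two_mul_sub_one_pos (by linarith) (mem_Icc.mp hk).1
    positivity
  calc _ ≤ exp (∑ k ∈ Icc 2 n, ((n - k : ℕ) : ℝ) * (2 / ((n : ℝ) ^ k - 2 * n - 1))) :=
        prod_one_add_pow_le_exp_sum _ _ _ hterm
    _ ≤ exp (2 / 5) := by
      gcongr
      refine (sum_Icc_sub_mul_two_div_le (by omega)).trans ?_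
      gcongr
      linarith
    _ ≤ 3 / 2 := exp_two_fifths_le
end
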